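/- Assume every admissible set of size k has infinitely many translates containing two primes. Then there exist infinitely many Polignac numbers. -/

import Mathlib

/-!
If all Polignac numbers were at most `B`, take `H = {0, M, 2M, …, (k-1)M}` with `M = k! (B + 1)`.
Every prime `p ≤ k` divides `M`, so `H` misses the residue `1` mod `p`, while a prime `p > k`
cannot be covered by `k` residues; hence `H` is admissible. Infinitely many translates of `H`
contain two primes, and as there are only finitely many pairs in `H`, one fixed difference `b - a`
occurs infinitely often. Among the integer primes `x`, `x + (b - a)` only finitely many straddle
`0`, so `b - a` is a Polignac number, and it exceeds `B` being a positive multiple of `M`.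
-/

def Admissible (H : Finset ℤ) : Prop :=
  ∀ p : ℕ, p.Prime → ∃ n : ZMod p, ∀ h ∈ H, (h : ZMod p) ≠ n

def IsPolignac (m : ℕ) : Prop :=
  {p : ℕ | p.Prime ∧ (p + m).Prime}.Infinite

lemma isPolignac_of_infinite_int_prime_pairs {d : ℕ}
    (h : {x : ℤ | Prime x ∧ Prime (x + d)}.Infinite) : IsPolignac d := by
  intro hfin
  refine h (((hfin.image Nat.cast).union ((hfin.image fun q : ℕ => -((q : ℤ) + d)).union
    (Set.finite_Ico (-(d : ℤ)) 0))).subset ?_)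
  rintro x ⟨hx, hxd⟩
  replace hx := Int.prime_iff_natAbs_prime.mp hx
  replace hxd := Int.prime_iff_natAbs_prime.mp hxd
  rcases le_or_gt 0 x with hx0 | hx0
  · have hsum : x.natAbs + d = (x + d).natAbs := by omega
    exact Or.inl ⟨x.natAbs, ⟨hx, hsum ▸ hxd⟩, by simp [abs_of_nonneg hx0]⟩
  rcases lt_or_ge (x + d) 0 with hxd0 | hxd0
  · have hsum : (x + d).natAbs + d = x.natAbs := by omega
    exact Or.inr <| Or.inl ⟨(x + d).natAbs, ⟨hxd, hsum ▸ hx⟩, by dsimp only; omega⟩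
  · exact Or.inr <| Or.inr ⟨by omega, hx0⟩

lemma isPolignac_of_infinite_translates {a b : ℤ} (hab : a < b)
    (h : {n : ℤ | Prime (n + a) ∧ Prime (n + b)}.Infinite) : IsPolignac (b - a).toNat := by
  refine isPolignac_of_infinite_int_prime_pairs ((h.image (add_left_injective a).injOn).mono ?_)
  rintro _ ⟨n, ⟨ha, hb⟩, rfl⟩
  refine ⟨ha, ?_⟩
  rwa [Int.toNat_of_nonneg (sub_nonneg.mpr hab.le), add_add_sub_cancel]

lemma exists_isPolignac_of_infinite_pairs (H : Finset ℤ)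
    (h : {n : ℤ | ∃ h₁ ∈ H, ∃ h₂ ∈ H, h₁ ≠ h₂ ∧ Prime (n + h₁) ∧ Prime (n + h₂)}.Infinite) :
    ∃ a ∈ H, ∃ b ∈ H, a < b ∧ IsPolignac (b - a).toNat := by
  by_contra! hnot
  have hfin : ∀ q ∈ ((H ×ˢ H).filter fun q => q.1 < q.2 : Set (ℤ × ℤ)),
      {n : ℤ | Prime (n + q.1) ∧ Prime (n + q.2)}.Finite := by
    intro q hq
    simp only [Finset.coe_filter, Finset.mem_product, Set.mem_ofPred_eq] at hq
    exact Set.not_infinite.mp fun hinf => hnot _ hq.1.1 _ hq.1.2 hq.2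
      (isPolignac_of_infinite_translates hq.2 hinf)
  refine h ((Set.Finite.biUnion (Finset.finite_toSet _) hfin).subset ?_)
  rintro n ⟨h₁, hh₁, h₂, hh₂, hne, hp₁, hp₂⟩
  simp only [Set.mem_iUnion, Finset.coe_filter, Finset.mem_product, Set.mem_ofPred_eq]
  rcases hne.lt_or_gt with hlt | hlt
  · exact ⟨(h₁, h₂), ⟨⟨hh₁, hh₂⟩, hlt⟩, hp₁, hp₂⟩
  · exact ⟨(h₂, h₁), ⟨⟨hh₂, hh₁⟩, hlt⟩, hp₂, hp₁⟩

lemma exists_zmod_forall_ne_of_card_lt (H : Finset ℤ) {p : ℕ} [NeZero p] (hH : H.card < p) :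
    ∃ n : ZMod p, ∀ h ∈ H, (h : ZMod p) ≠ n := by
  by_contra! hall
  have hsurj : (Finset.univ : Finset (ZMod p)) ⊆ H.image (↑) := fun n _ => by
    obtain ⟨h, hh, rfl⟩ := hall n
    exact Finset.mem_image_of_mem _ hh
  have := (Finset.card_le_card hsurj).trans Finset.card_image_le
  rw [Finset.card_univ, ZMod.card] at this
  omega

lemma admissible_of_forall_dvd (H : Finset ℤ) {M : ℕ} (hM : H.card.factorial ∣ M)
    (hH : ∀ h ∈ H, (M : ℤ) ∣ h) : Admissible H := by
  intro p hp
  rcases le_or_gt p H.card with hpk | hpk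
  · have hpM : (p : ℤ) ∣ M := Int.natCast_dvd_natCast.mpr ((Nat.dvd_factorial hp.pos hpk).trans hM)
    have : Fact p.Prime := ⟨hp⟩
    refine ⟨1, fun h hh => ?_⟩
    rw [(ZMod.intCast_zmod_eq_zero_iff_dvd h p).mpr (hpM.trans (hH h hh))]
    exact zero_ne_one
  · have : NeZero p := ⟨hp.ne_zero⟩
    exact exists_zmod_forall_ne_of_card_lt H hpk

theorem stmt_11_general (k : ℕ)
    (hyp : ∀ H : Finset ℤ, H.card = k → Admissible H →
      {n : ℤ | ∃ h₁ ∈ H, ∃ h₂ ∈ H, h₁ ≠ h₂ ∧ Prime (n + h₁) ∧ Prime (n + h₂)}.Infinite) :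
    {m : ℕ | IsPolignac m}.Infinite := by
  refine Set.infinite_of_not_bddAbove fun ⟨B, hB⟩ => ?_
  set M := k.factorial * (B + 1)
  have hBM : B < M := Nat.lt_of_lt_of_le B.lt_succ_self (Nat.le_mul_of_pos_left _ k.factorial_pos)
  set H : Finset ℤ := (Finset.range k).image fun i : ℕ => (i : ℤ) * M
  have hcard : H.card = k := by
    have hinj : Function.Injective fun i : ℕ => (i : ℤ) * M :=
      (mul_left_injective₀ (by positivity)).comp Nat.cast_injective
    rw [Finset.card_image_of_injective _ hinj, Finset.card_range]
  have hdvd : ∀ h ∈ H, (M : ℤ) ∣ h := by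
    simp only [H, Finset.mem_image]
    rintro _ ⟨i, -, rfl⟩
    exact dvd_mul_left _ _
  obtain ⟨a, ha, b, hb, hab, hpol⟩ := exists_isPolignac_of_infinite_pairs H
    (hyp H hcard (admissible_of_forall_dvd H (hcard ▸ dvd_mul_right _ _) hdvd))
  have hMba : (M : ℤ) ≤ b - a := Int.le_of_dvd (sub_pos.mpr hab) (dvd_sub (hdvd b hb) (hdvd a ha))
  have := hB hpol
  omega

theorem stmt_11 (k : ℕ) (hk : 2 ≤ k)
    (hyp : ∀ H : Finset ℤ, H.card = k → Admissible H →
      {n : ℤ | ∃ h₁ ∈ H, ∃ h₂ ∈ H, h₁ ≠ h₂ ∧ Prime (n + h₁) ∧ Prime (n + h₂)}.Infinite) :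
    {m : ℕ | IsPolignac m}.Infinite :=
  stmt_11_general k hyp
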